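/- arXiv:1801.02411 — 3 statements merged into one kernel-verified Lean document; each statement's English description precedes it below -/
import Mathlib

section
/- Let n ≥ 1, let z ∈ EuclideanSpace ℝ (Fin n), and let η ≥ 0. Define p* = (max (1 - η / ‖z‖) 0) • z if z ≠ 0, and p* = 0 if z = 0. Then p* is a minimizer of the function p ↦ (1/2)‖p - z‖² + η‖p‖ over EuclideanSpace ℝ (Fin n), and it is the unique minimizer. -/
open scoped Classical

open scoped RealInnerProductSpace in
lemma bst_min (n : ℕ)
    (z : EuclideanSpace ℝ (Fin n)) (η : ℝ) (hη : 0 ≤ η)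
    (pstar : EuclideanSpace ℝ (Fin n))
    (hpstar : pstar = if z = 0 then 0 else (max (1 - η / ‖z‖) 0) • z) :
    ∀ p : EuclideanSpace ℝ (Fin n),
        (1 / 2) * ‖pstar - z‖ ^ 2 + η * ‖pstar‖ ≤ (1 / 2) * ‖p - z‖ ^ 2 + η * ‖p‖ := by
  intro p
  by_cases hz : z = 0
  · rw [if_pos hz] at hpstar
    subst hz; subst hpstar
    simp only [sub_zero, norm_zero, zero_sub, norm_neg]
    nlinarith [mul_nonneg hη (norm_nonneg p), sq_nonneg ‖p‖]
  · rw [if_neg hz] at hpstar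
    have hN : 0 < ‖z‖ := norm_pos_iff.mpr hz
    set N := ‖z‖ with hNdef
    set c : ℝ := max (1 - η / N) 0 with hc
    have hc0 : 0 ≤ c := le_max_right _ _
    have hct : c = max (N - η) 0 / N := by
      rw [hc]
      rcases le_total η N with h | h
      · rw [max_eq_left (sub_nonneg.mpr ((div_le_one hN).mpr h)),
          max_eq_left (by linarith : (0:ℝ) ≤ N - η)]
        field_simp
      · rw [max_eq_right (sub_nonpos.mpr ((one_le_div hN).mpr h)),
          max_eq_right (by linarith : N - η ≤ (0:ℝ)), zero_div]
    set t : ℝ := max (N - η) 0 with ht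
    have ht0 : 0 ≤ t := le_max_right _ _
    have hnp : ‖pstar‖ = t := by
      rw [hpstar, norm_smul, hct, Real.norm_eq_abs, abs_of_nonneg (by positivity)]
      field_simp
      rw [hNdef]
    have hip : ⟪pstar, z⟫ = t * N := by
      rw [hpstar, real_inner_smul_left, real_inner_self_eq_norm_sq, hct]
      field_simp
      ring
    have hcs : ⟪p, z⟫ ≤ ‖p‖ * N := real_inner_le_norm p z
    have e1 : ‖pstar - z‖ ^ 2 = ‖pstar‖ ^ 2 - 2 * ⟪pstar, z⟫ + N ^ 2 := by
      rw [norm_sub_sq_real]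
    have e2 : ‖p - z‖ ^ 2 = ‖p‖ ^ 2 - 2 * ⟪p, z⟫ + N ^ 2 := by
      rw [norm_sub_sq_real]
    rw [e1, e2, hnp, hip]
    have hs : 0 ≤ ‖p‖ := norm_nonneg p
    rcases le_total η N with h | h
    · have : t = N - η := max_eq_left (by linarith)
      nlinarith [sq_nonneg (‖p‖ - t)]
    · have : t = 0 := max_eq_right (by linarith)
      nlinarith [sq_nonneg ‖p‖]

set_option maxHeartbeats 1000000 in
/-- Block soft-thresholding: closed-form solution of the proximal operator of a
scaled Euclidean norm, `prox_{η‖·‖}(z) = argmin_p (1/2)‖p - z‖² + η‖p‖`.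
The minimizer is `max (1 - η/‖z‖) 0 • z` (and `0` when `z = 0`), and it is unique. -/
theorem block_soft_thresholding (n : ℕ) (hn : 1 ≤ n)
    (z : EuclideanSpace ℝ (Fin n)) (η : ℝ) (hη : 0 ≤ η)
    (pstar : EuclideanSpace ℝ (Fin n))
    (hpstar : pstar = if z = 0 then 0 else (max (1 - η / ‖z‖) 0) • z) :
    (∀ p : EuclideanSpace ℝ (Fin n),
        (1 / 2) * ‖pstar - z‖ ^ 2 + η * ‖pstar‖ ≤ (1 / 2) * ‖p - z‖ ^ 2 + η * ‖p‖) ∧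
    (∀ q : EuclideanSpace ℝ (Fin n),
        (∀ p : EuclideanSpace ℝ (Fin n),
          (1 / 2) * ‖q - z‖ ^ 2 + η * ‖q‖ ≤ (1 / 2) * ‖p - z‖ ^ 2 + η * ‖p‖) →
        q = pstar) := by
  have hmin := bst_min n z η hη pstar hpstar
  refine ⟨hmin, ?_⟩
  intro q hq
  -- midpoint strong convexity argument
  set m : EuclideanSpace ℝ (Fin n) := (1/2 : ℝ) • (q + pstar) with hm
  have hpar : ‖m - z‖ ^ 2 =
      (1/2) * ‖q - z‖ ^ 2 + (1/2) * ‖pstar - z‖ ^ 2 - (1/4) * ‖q - pstar‖ ^ 2 := by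
    have h1 : ‖(q - z) + (pstar - z)‖ ^ 2 + ‖(q - z) - (pstar - z)‖ ^ 2
        = 2 * ‖q - z‖ ^ 2 + 2 * ‖pstar - z‖ ^ 2 := by
      have := parallelogram_law_with_norm ℝ (q - z) (pstar - z)
      nlinarith [this]
    have h2 : m - z = (1/2 : ℝ) • ((q - z) + (pstar - z)) := by
      rw [hm]; module
    have h3 : (q - z) - (pstar - z) = q - pstar := by abel
    rw [h3] at h1
    rw [h2, norm_smul, Real.norm_eq_abs, abs_of_nonneg (by norm_num : (0:ℝ) ≤ 1/2)]
    nlinarith [h1]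
  have hnm : ‖m‖ ≤ (1/2) * ‖q‖ + (1/2) * ‖pstar‖ := by
    rw [hm, norm_smul, Real.norm_eq_abs, abs_of_nonneg (by norm_num : (0:ℝ) ≤ 1/2)]
    nlinarith [norm_add_le q pstar]
  have h1 := hq pstar
  have h2 := hmin q
  have h3 := hq m
  have h5 : η * ‖m‖ ≤ 1/2 * (η * ‖q‖) + 1/2 * (η * ‖pstar‖) := by
    calc η * ‖m‖ ≤ η * ((1/2) * ‖q‖ + (1/2) * ‖pstar‖) :=
          mul_le_mul_of_nonneg_left hnm hη
      _ = 1/2 * (η * ‖q‖) + 1/2 * (η * ‖pstar‖) := by ring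
  have hd : ‖q - pstar‖ ^ 2 ≤ 0 := by linarith
  have h0 : ‖q - pstar‖ ^ 2 = 0 := le_antisymm hd (sq_nonneg _)
  have : ‖q - pstar‖ = 0 := pow_eq_zero_iff (by norm_num) |>.mp h0
  exact sub_eq_zero.mp (norm_eq_zero.mp this)
end

section
/- Let U (users), R (reviews), B (businesses), A (aspects) be finite types, and let wUR : U → R → Prop, wRB : R → B → Prop, wRA : R → A → Prop, wUB : U → B → Prop be decidable relations with indicator matrices W_UR ∈ Matrix U R ℕ, W_RB ∈ Matrix R B ℕ, W_RA ∈ Matrix R A ℕ, W_UB ∈ Matrix U B ℕ. Then for all i : U and j : B, (W_UR * ((W_RB * W_RBᵀ) ⊙ (W_RA * W_RAᵀ)) * W_URᵀ * W_UB) i j = the cardinality of the finite set {(r, r', b, a, u) : R × R × B × A × U | wUR i r ∧ wRB r b ∧ wRA r a ∧ wRB r' b ∧ wRA r' a ∧ wUR u r' ∧ wUB u j}. -/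
/-!
Writing `H = (W_RB W_RBᵀ) ⊙ (W_RA W_RAᵀ)`, the entry `H r r'` is the sum over pairs `(b, a)` of
`W_RB r b W_RA r a W_RB r' b W_RA r' a`. Reassociating the similarity matrix as
`W_UR (H (W_URᵀ W_UB))` and expanding every product therefore writes its `(i, j)` entry as a sum,
over all quintuples `(r, r', b, a, u)`, of the product of the seven matrix entries along the edges
of `M₉`. For indicator matrices that product is the indicator of the conjunction of the seven
edge relations, so the sum counts the instances.
-/

open Matrix Finset

section

variable {U R B A α : Type*} [CommSemiring α] [Fintype B] [Fintype A]

theorem Matrix.hadamard_mul_transpose_apply (M : Matrix R B α) (N : Matrix R A α) (r r' : R) :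
    hadamard (M * Mᵀ) (N * Nᵀ) r r' = ∑ p : B × A, M r p.1 * N r p.2 * (M r' p.1 * N r' p.2) := by
  simp only [hadamard_apply, mul_apply, transpose_apply, sum_mul_sum, Fintype.sum_prod_type,
    mul_mul_mul_comm]

-- The product is nested to the right, like the conjunction defining an instance of `M₉`.
theorem metagraph_M9_similarity_apply [Fintype U] [Fintype R] (WUR : Matrix U R α)
    (WRB : Matrix R B α) (WRA : Matrix R A α) (WUB : Matrix U B α) (i : U) (j : B) :
    (WUR * hadamard (WRB * WRBᵀ) (WRA * WRAᵀ) * WURᵀ * WUB) i j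
      = ∑ q : R × R × B × A × U, WUR i q.1 * (WRB q.1 q.2.2.1 * (WRA q.1 q.2.2.2.1
          * (WRB q.2.1 q.2.2.1 * (WRA q.2.1 q.2.2.2.1 * (WUR q.2.2.2.2 q.2.1 * WUB q.2.2.2.2 j))))) := by
  rw [Matrix.mul_assoc, Matrix.mul_assoc]
  simp only [mul_apply, transpose_apply, hadamard_mul_transpose_apply]
  -- `sum_mul_sum` must fire before `mul_sum`, so that the `(b, a)`-sum lands outside the `u`-sum.
  simp only [sum_mul_sum]
  simp only [mul_sum, mul_assoc, Fintype.sum_prod_type]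

end

/-- Correctness of Algorithm 1: the metagraph similarity matrix
`C_{M₉} = W_UR ((W_RB W_RBᵀ) ⊙ (W_RA W_RAᵀ)) W_URᵀ W_UB` counts, in entry `(i, j)`,
the number of instances `(r, r', b, a, u)` of metagraph `M₉` connecting user `i`
to business `j`: a review `r` written by `i` and a review `r'` written by some
user `u` who rated business `j`, such that `r` and `r'` rate a common business `b`
and mention a common aspect `a`. -/
theorem metagraph_M9_similarity_counts_instances
    {U R B A : Type*} [Fintype U] [Fintype R] [Fintype B] [Fintype A]
    (wUR : U → R → Prop) (wRB : R → B → Prop) (wRA : R → A → Prop)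
    (wUB : U → B → Prop)
    [∀ u r, Decidable (wUR u r)] [∀ r b, Decidable (wRB r b)]
    [∀ r a, Decidable (wRA r a)] [∀ u b, Decidable (wUB u b)]
    (WUR : Matrix U R ℕ) (WRB : Matrix R B ℕ) (WRA : Matrix R A ℕ)
    (WUB : Matrix U B ℕ)
    (hWUR : ∀ u r, WUR u r = if wUR u r then 1 else 0)
    (hWRB : ∀ r b, WRB r b = if wRB r b then 1 else 0)
    (hWRA : ∀ r a, WRA r a = if wRA r a then 1 else 0)
    (hWUB : ∀ u b, WUB u b = if wUB u b then 1 else 0)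
    (i : U) (j : B) :
    (WUR * Matrix.hadamard (WRB * WRBᵀ) (WRA * WRAᵀ) * WURᵀ * WUB) i j
      = (Finset.filter
          (fun q : R × R × B × A × U =>
            wUR i q.1 ∧ wRB q.1 q.2.2.1 ∧ wRA q.1 q.2.2.2.1
              ∧ wRB q.2.1 q.2.2.1 ∧ wRA q.2.1 q.2.2.2.1
              ∧ wUR q.2.2.2.2 q.2.1 ∧ wUB q.2.2.2.2 j)
          Finset.univ).card := by
  rw [metagraph_M9_similarity_apply, card_filter]
  simp only [hWUR, hWRB, hWRA, hWUB, ite_zero_mul_ite_zero, mul_one]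
end

section
/- Let n ≥ 1 and define f : EuclideanSpace ℝ (Fin n) → ℝ by f(x) = Real.log (1 + ‖x‖) - ‖x‖. Then f is differentiable at every point x (including x = 0), and its gradient at x is -(1 + ‖x‖)⁻¹ • x; in particular the gradient is continuous, so f is continuously differentiable. -/
open InnerProductSpace

lemma log_ineq (r : ℝ) (hr : 0 ≤ r) : |Real.log (1 + r) - r| ≤ r ^ 2 := by
  have hpos : (0:ℝ) < 1 + r := by linarith
  have h1 : Real.log (1 + r) ≤ r := by
    have := Real.log_le_sub_one_of_pos hpos
    linarith
  have h2 : r / (1 + r) ≤ Real.log (1 + r) := by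
    have key := Real.log_le_sub_one_of_pos (show (0:ℝ) < (1+r)⁻¹ by positivity)
    rw [Real.log_inv] at key
    have heq : (1+r)⁻¹ - 1 = -(r/(1+r)) := by field_simp; ring
    rw [heq] at key
    linarith
  have h3 : r - r / (1 + r) ≤ r ^ 2 := by
    have heq : r - r / (1+r) = r^2 / (1+r) := by field_simp; ring
    rw [heq, div_le_iff₀ hpos]
    nlinarith
  rw [abs_le]
  constructor <;> nlinarith

lemma lsp_hasGradientAt {E : Type*} [NormedAddCommGroup E] [InnerProductSpace ℝ E]
    [CompleteSpace E] (x : E) :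
    HasGradientAt (fun y : E => Real.log (1 + ‖y‖) - ‖y‖) (-(1 + ‖x‖)⁻¹ • x) x := by
  rw [hasGradientAt_iff_hasFDerivAt]
  by_cases hx : x = 0
  · subst hx
    rw [smul_zero, map_zero, hasFDerivAt_iff_isLittleO_nhds_zero]
    simp only [zero_add, add_zero, norm_zero, Real.log_one, ContinuousLinearMap.zero_apply, sub_zero]
    have hbd : ∀ y : E, ‖Real.log (1 + ‖y‖) - ‖y‖‖ ≤ 1 * ‖(‖y‖^2 : ℝ)‖ := by
      intro y
      rw [one_mul, Real.norm_eq_abs, Real.norm_eq_abs,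
        abs_of_nonneg (by positivity : (0:ℝ) ≤ ‖y‖^2)]
      exact log_ineq ‖y‖ (norm_nonneg y)
    have hO : (fun y : E => Real.log (1 + ‖y‖) - ‖y‖) =O[nhds (0:E)] (fun y : E => ‖y‖^2) :=
      Asymptotics.IsBigO.of_bound 1 (Filter.Eventually.of_forall hbd)
    refine hO.trans_isLittleO ?_
    rw [Asymptotics.isLittleO_iff]
    intro c hc
    rw [Metric.eventually_nhds_iff]
    refine ⟨c, hc, fun y hy => ?_⟩
    rw [dist_zero_right] at hy
    have : ‖(‖y‖^2 : ℝ)‖ = ‖y‖ * ‖y‖ := by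
      rw [Real.norm_eq_abs, abs_of_nonneg (by positivity)]; ring
    rw [this]
    exact mul_le_mul hy.le le_rfl (norm_nonneg y) hc.le
  · have hnorm : (0:ℝ) < ‖x‖ := norm_pos_iff.mpr hx
    have hsq : HasFDerivAt (fun y : E => ‖y‖^2) (2 • innerSL ℝ x) x :=
      (hasStrictFDerivAt_norm_sq x).hasFDerivAt
    have hsqrt : HasDerivAt Real.sqrt (1 / (2 * Real.sqrt (‖x‖^2))) (‖x‖^2) :=
      Real.hasDerivAt_sqrt (by positivity)
    have hnormD : HasFDerivAt (fun y : E => ‖y‖)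
        ((1 / (2 * ‖x‖)) • (2 • innerSL ℝ x)) x := by
      have h := hsqrt.comp_hasFDerivAt x hsq
      rw [Real.sqrt_sq hnorm.le] at h
      have heq : (Real.sqrt ∘ fun y : E => ‖y‖^2) = fun y : E => ‖y‖ :=
        funext fun y => Real.sqrt_sq (norm_nonneg y)
      rwa [heq] at h
    have hφ : HasDerivAt (fun r : ℝ => Real.log (1 + r) - r) ((1 + ‖x‖)⁻¹ - 1) ‖x‖ := by
      have h1 : HasDerivAt (fun r : ℝ => 1 + r) 1 ‖x‖ := (hasDerivAt_id _).const_add 1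
      have h2 := (Real.hasDerivAt_log (by positivity : (1:ℝ) + ‖x‖ ≠ 0)).comp ‖x‖ h1
      have h3 := h2.sub (hasDerivAt_id ‖x‖)
      rw [mul_one] at h3
      exact h3
    have hF := hφ.comp_hasFDerivAt x hnormD
    convert hF using 1
    · rfl
    · rfl
    ext y
    simp only [ContinuousLinearMap.coe_smul', Pi.smul_apply, innerSL_apply_apply, toDual_apply_apply,
      real_inner_smul_left, smul_eq_mul]
    field_simp
    ring

/-- Smoothness of the augmented LSP term: `f(x) = log(1 + ‖x‖) - ‖x‖` is
differentiable everywhere (including `x = 0`) with gradient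
`∇f(x) = -(1 + ‖x‖)⁻¹ • x`; the gradient is continuous, so `f` is
continuously differentiable. -/
theorem lsp_augmented_term_smooth (n : ℕ) (hn : 1 ≤ n)
    (f : EuclideanSpace ℝ (Fin n) → ℝ)
    (hf : ∀ x, f x = Real.log (1 + ‖x‖) - ‖x‖) :
    (∀ x : EuclideanSpace ℝ (Fin n), DifferentiableAt ℝ f x) ∧
    (∀ x : EuclideanSpace ℝ (Fin n), gradient f x = -(1 + ‖x‖)⁻¹ • x) ∧
    Continuous (gradient f) ∧
    ContDiff ℝ 1 f := by
  have hfe : f = fun y => Real.log (1 + ‖y‖) - ‖y‖ := funext hf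
  subst hfe
  set E := EuclideanSpace ℝ (Fin n)
  have key : ∀ x : E, HasGradientAt (fun y : E => Real.log (1 + ‖y‖) - ‖y‖)
      (-(1 + ‖x‖)⁻¹ • x) x := lsp_hasGradientAt
  have hdiff : ∀ x : E, DifferentiableAt ℝ (fun y : E => Real.log (1 + ‖y‖) - ‖y‖) x :=
    fun x => ((hasGradientAt_iff_hasFDerivAt.mp (key x)).differentiableAt)
  have hgrad : gradient (fun y : E => Real.log (1 + ‖y‖) - ‖y‖)
      = fun x : E => -(1 + ‖x‖)⁻¹ • x := funext fun x => (key x).gradient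
  have hcont : Continuous fun x : E => -(1 + ‖x‖)⁻¹ • x := by
    have h1 : Continuous fun x : E => -(1 + ‖x‖)⁻¹ :=
      (((continuous_const.add continuous_norm).inv₀
        (fun x => (by positivity : (1:ℝ) + ‖x‖ ≠ 0))).neg)
    exact h1.smul continuous_id
  refine ⟨hdiff, fun x => (key x).gradient, by rw [hgrad]; exact hcont, ?_⟩
  rw [contDiff_one_iff_fderiv]
  refine ⟨fun x => hdiff x, ?_⟩
  have hfd : (fderiv ℝ fun y : E => Real.log (1 + ‖y‖) - ‖y‖)
      = fun x : E => (InnerProductSpace.toDual ℝ E)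
        (gradient (fun y : E => Real.log (1 + ‖y‖) - ‖y‖) x) := by
    funext x
    rw [gradient, LinearIsometryEquiv.apply_symm_apply]
  rw [hfd]
  exact (InnerProductSpace.toDual ℝ E).continuous.comp (hgrad ▸ hcont)
end
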